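/- arXiv:math/9910185 — 2 statements merged into one kernel-verified Lean document; each statement's English description precedes it below -/
import Mathlib

section
/- For every integer n ≥ 12, let x = ⌈((3-√7)/2)·n + √7·(23/14) - 4 - 0.0045⌉, with 1 ≤ x ≤ n/2; if k is an integer satisfying k ≥ (C(n,2) - 2·C(x,2) - 3)/(3n - 2x - 7), then k ≥ ⌈((3-√7)/2)·n + 0.342⌉. -/
/-- The key arithmetic step in the lower bound for the geometric thickness of
complete graphs: for `n ≥ 12` and
`x = ⌈((3-√7)/2)·n + √7·(23/14) - 4 - 0.0045⌉`, any integer `k` with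
`k ≥ (C(n,2) - 2·C(x,2) - 3)/(3n - 2x - 7)` satisfies
`k ≥ ⌈((3-√7)/2)·n + 0.342⌉`.  (Here `C(x,2) = x(x-1)/2` for real `x`.) -/
theorem stmt_0 (n : ℤ) (hn : 12 ≤ n) (k : ℤ)
    (x : ℝ)
    (hx : x = (⌈((3 - Real.sqrt 7) / 2) * (n : ℝ) + Real.sqrt 7 * (23 / 14) - 4 - 0.0045⌉ : ℤ))
    (hx1 : 1 ≤ x) (hx2 : x ≤ (n : ℝ) / 2)
    (hk : (k : ℝ) ≥ ((n : ℝ) * ((n : ℝ) - 1) / 2 - 2 * (x * (x - 1) / 2) - 3) /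
        (3 * (n : ℝ) - 2 * x - 7)) :
    k ≥ ⌈((3 - Real.sqrt 7) / 2) * (n : ℝ) + 0.342⌉ := by
  set s := Real.sqrt 7 with hs_def
  have hs2 : s ^ 2 = 7 := Real.sq_sqrt (by norm_num)
  have hs0 : (0:ℝ) ≤ s := Real.sqrt_nonneg 7
  have hslb : (2.6457:ℝ) ≤ s := by nlinarith [hs2, hs0]
  have hsub : s ≤ (2.6458:ℝ) := by nlinarith [hs2, hs0]
  have hn' : (12:ℝ) ≤ (n:ℝ) := by exact_mod_cast hn
  set X : ℤ := ⌈((3 - s) / 2) * (n : ℝ) + s * (23 / 14) - 4 - 0.0045⌉ with hX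
  -- the target ceiling is at most X
  have hm : ⌈((3 - s) / 2) * (n : ℝ) + 0.342⌉ ≤ X := by
    apply Int.ceil_le_ceil
    nlinarith
  -- denominator positive
  have hd : (0:ℝ) < 3 * (n : ℝ) - 2 * x - 7 := by nlinarith
  -- key quadratic inequality
  have hh : x^2 - (3*(n:ℝ) - 6)*x + (n:ℝ)*((n:ℝ)-1)/2 + 3*(n:ℝ) - 10 > 0 := by
    rcases eq_or_lt_of_le hn with h12 | h13
    · -- n = 12
      have hn12 : (n:ℝ) = 12 := by exact_mod_cast h12.symm
      have hX3 : X = 3 := by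
        rw [hX, Int.ceil_eq_iff]
        constructor
        · push_cast
          nlinarith
        · push_cast
          nlinarith
      rw [hx, hX3, hn12]
      norm_num
    · -- n ≥ 13
      have hn13 : (13:ℝ) ≤ (n:ℝ) := by exact_mod_cast h13
      have hceil : x < (((3 - s) / 2) * (n : ℝ) + s * (23 / 14) - 4 - 0.0045) + 1 := by
        rw [hx]
        exact_mod_cast Int.ceil_lt_add_one _
      -- B := 3n - 6 - 2x  >  A := s*(n - 23/7) + 0.009 > 0
      have hA : s * ((n:ℝ) - 23/7) + 0.009 < 3*(n:ℝ) - 6 - 2*x := by nlinarith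
      have hApos : (0:ℝ) < s * ((n:ℝ) - 23/7) + 0.009 := by nlinarith
      have hA2 : (s * ((n:ℝ) - 23/7) + 0.009)^2 ≥ 7*(n:ℝ)^2 - 46*(n:ℝ) + 76 := by
        nlinarith [mul_nonneg (sub_nonneg.2 hslb) (by linarith : (0:ℝ) ≤ (n:ℝ) - 23/7)]
      nlinarith [sq_nonneg (3*(n:ℝ) - 6 - 2*x), mul_self_lt_mul_self (le_of_lt hApos) hA]
  -- f(x) > x - 1
  have hfx : x - 1 < ((n : ℝ) * ((n : ℝ) - 1) / 2 - 2 * (x * (x - 1) / 2) - 3) /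
      (3 * (n : ℝ) - 2 * x - 7) := by
    rw [lt_div_iff₀ hd]
    nlinarith
  have hkx : (x:ℝ) - 1 < (k:ℝ) := lt_of_lt_of_le hfx hk
  have hmx : ((⌈((3 - s) / 2) * (n : ℝ) + 0.342⌉ : ℤ) : ℝ) ≤ x := by
    rw [hx]; exact_mod_cast hm
  have : ((⌈((3 - s) / 2) * (n : ℝ) + 0.342⌉ : ℤ) : ℝ) < (k:ℝ) + 1 := by linarith
  have hlt : ⌈((3 - s) / 2) * (n : ℝ) + 0.342⌉ < k + 1 := by exact_mod_cast this
  omega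
end

section
/- For positive integers a ≤ b, the geometric thickness of K_{a,b} is at most ⌈a/2⌉. -/
/-- A straight-line drawing of `G` in `k` layers: an injective placement of
vertices in the plane and an assignment of edges to layers such that two
distinct edges on the same layer meet only in shared endpoints. -/
def HasGeomDrawing {V : Type*} (G : SimpleGraph V) (k : ℕ) : Prop :=
  ∃ (pos : V → EuclideanSpace ℝ (Fin 2)) (layer : Sym2 V → Fin k),
    Function.Injective pos ∧
    ∀ u v x y : V, G.Adj u v → G.Adj x y → s(u, v) ≠ s(x, y) →
      layer s(u, v) = layer s(x, y) →
      segment ℝ (pos u) (pos v) ∩ segment ℝ (pos x) (pos y) ⊆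
        pos '' ({u, v} ∩ ({x, y} : Set V))

/-- The geometric thickness of a graph: the smallest number of layers in a
straight-line drawing with pairwise noncrossing edges in each layer. -/
noncomputable def geomThickness {V : Type*} (G : SimpleGraph V) : ℕ :=
  sInf {k | HasGeomDrawing G k}


/-! Put the `b` vertices on the horizontal axis and the `a` vertices on the vertical axis,
alternately above and below it. Layer `m` takes all edges at the vertices `2m` and `2m + 1`, one
above and one below the axis. Two of its edges at the same vertex meet only there, and an edge
from above and one from below can only meet on the horizontal axis, that is, at a common endpoint.
-/

open Set Function

lemma geomThickness_le_of_hasGeomDrawing {V : Type*} {G : SimpleGraph V} {k : ℕ}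
    (h : HasGeomDrawing G k) : geomThickness G ≤ k :=
  Nat.sInf_le h

section AxesSegments

variable {h s : ℝ} {z : EuclideanSpace ℝ (Fin 2)}

lemma mem_segment_axes (hz : z ∈ segment ℝ !₂[0, h] !₂[s, 0]) :
    ∃ θ ∈ Icc (0 : ℝ) 1, z = !₂[θ * s, (1 - θ) * h] := by
  rw [segment_eq_image] at hz
  obtain ⟨θ, hθ, rfl⟩ := hz
  exact ⟨θ, hθ, by ext i; fin_cases i <;> simp⟩

lemma eq_apex_of_mem_segment_of_mem_segment {t : ℝ} (hh : h ≠ 0) (hst : s ≠ t)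
    (hs : z ∈ segment ℝ !₂[0, h] !₂[s, 0]) (ht : z ∈ segment ℝ !₂[0, h] !₂[t, 0]) :
    z = !₂[0, h] := by
  obtain ⟨θ, -, rfl⟩ := mem_segment_axes hs
  obtain ⟨θ', -, hθ'⟩ := mem_segment_axes ht
  simp only [WithLp.toLp.injEq, Matrix.vecCons_inj, and_true] at hθ' ⊢
  have hθθ' : θ = θ' := by
    have := mul_right_cancel₀ hh hθ'.2
    linarith
  subst hθθ'
  have hθ : θ = 0 := by
    by_contra hθ
    exact hst (mul_left_cancel₀ hθ hθ'.1)
  simp [hθ]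

lemma eq_foot_of_mem_segment_of_mem_segment {k t : ℝ} (hhk : h * k < 0)
    (hs : z ∈ segment ℝ !₂[0, h] !₂[s, 0]) (ht : z ∈ segment ℝ !₂[0, k] !₂[t, 0]) :
    z = !₂[s, 0] ∧ z = !₂[t, 0] := by
  obtain ⟨θ, ⟨-, hθ1⟩, rfl⟩ := mem_segment_axes hs
  obtain ⟨θ', ⟨-, hθ'1⟩, hθ'⟩ := mem_segment_axes ht
  simp only [WithLp.toLp.injEq, Matrix.vecCons_inj, and_true] at hθ' ⊢
  have hh : h ≠ 0 := by rintro rfl; simp at hhk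
  have hk : k ≠ 0 := by rintro rfl; simp at hhk
  have hheight : (1 - θ) * h = 0 := by
    have : ((1 - θ) * h) ^ 2 = (1 - θ) * h * ((1 - θ') * k) := by rw [← hθ'.2]; ring
    nlinarith [mul_nonneg (sub_nonneg.2 hθ1) (sub_nonneg.2 hθ'1)]
  have hθ : θ = 1 := by linarith [(mul_eq_zero.1 hheight).resolve_right hh]
  have hθ'_eq : θ' = 1 := by
    rw [hθ'.2] at hheight
    linarith [(mul_eq_zero.1 hheight).resolve_right hk]
  subst hθ hθ'_eq
  simpa using hθ'.1

end AxesSegments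

section Sym2

variable {V E : Type*}

lemma segment_eq_of_sym2_eq [AddCommGroup E] [Module ℝ E] (pos : V → E) {u v u' v' : V}
    (h : s(u, v) = s(u', v')) : segment ℝ (pos u) (pos v) = segment ℝ (pos u') (pos v') := by
  rcases Sym2.eq_iff.1 h with ⟨rfl, rfl⟩ | ⟨rfl, rfl⟩
  · rfl
  · exact segment_symm ℝ _ _

lemma pair_eq_of_sym2_eq {u v u' v' : V} (h : s(u, v) = s(u', v')) :
    ({u, v} : Set V) = {u', v'} :=
  Set.pair_eq_pair_iff.2 (Sym2.eq_iff.1 h)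

end Sym2

section CompleteBipartite

variable {α β : Type*}

lemma completeBipartiteGraph.exists_sym2_eq_of_adj {u v : α ⊕ β}
    (h : (completeBipartiteGraph α β).Adj u v) : ∃ j i, s(u, v) = s(.inl j, .inr i) := by
  rcases u with j | i <;> rcases v with j' | i' <;> simp at h ⊢

noncomputable def axesPlacement (x : β → ℝ) (y : α → ℝ) : α ⊕ β → EuclideanSpace ℝ (Fin 2) :=
  Sum.elim (fun j ↦ !₂[0, y j]) (fun i ↦ !₂[x i, 0])

@[simp] lemma axesPlacement_inl (x : β → ℝ) (y : α → ℝ) (j : α) :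
    axesPlacement x y (.inl j) = !₂[0, y j] := rfl

@[simp] lemma axesPlacement_inr (x : β → ℝ) (y : α → ℝ) (i : β) :
    axesPlacement x y (.inr i) = !₂[x i, 0] := rfl

lemma axesPlacement_injective {x : β → ℝ} {y : α → ℝ} (hx : Injective x) (hy : Injective y)
    (hy0 : ∀ j, y j ≠ 0) : Injective (axesPlacement x y) := by
  rintro (j | i) (j' | i') h <;>
    simp only [axesPlacement_inl, axesPlacement_inr, WithLp.toLp.injEq, Matrix.vecCons_inj,
      and_true, true_and] at h
  · rw [hy h]
  · exact absurd h.2 (hy0 j)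
  · exact absurd h.2.symm (hy0 j')
  · rw [hx h]

-- `β`-vertices contribute `0`, so an edge of `K_{α,β}` lies on the layer of its `α`-endpoint.
def leftEndpointLayer {k : ℕ} [NeZero k] (layer : α → Fin k) : Sym2 (α ⊕ β) → Fin k :=
  Sym2.lift ⟨fun u v ↦ Sum.elim layer 0 u + Sum.elim layer 0 v, fun _ _ ↦ add_comm _ _⟩

@[simp] lemma leftEndpointLayer_mk {k : ℕ} [NeZero k] (layer : α → Fin k) (j : α) (i : β) :
    leftEndpointLayer layer s(.inl j, .inr i) = layer j := by
  simp [leftEndpointLayer]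

theorem hasGeomDrawing_completeBipartiteGraph {k : ℕ} [NeZero k] {x : β → ℝ} {y : α → ℝ}
    (layer : α → Fin k) (hx : Injective x) (hy : Injective y) (hy0 : ∀ j, y j ≠ 0)
    (hlayer : ∀ j j', layer j = layer j' → j ≠ j' → y j * y j' < 0) :
    HasGeomDrawing (completeBipartiteGraph α β) k := by
  refine ⟨axesPlacement x y, leftEndpointLayer layer, axesPlacement_injective hx hy hy0, ?_⟩
  intro u v u' v' huv hu'v' hne hsame
  obtain ⟨j, i, he⟩ := completeBipartiteGraph.exists_sym2_eq_of_adj huv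
  obtain ⟨j', i', he'⟩ := completeBipartiteGraph.exists_sym2_eq_of_adj hu'v'
  rw [segment_eq_of_sym2_eq _ he, segment_eq_of_sym2_eq _ he', pair_eq_of_sym2_eq he,
    pair_eq_of_sym2_eq he']
  rw [he, he'] at hne hsame
  simp only [leftEndpointLayer_mk] at hsame
  rintro z ⟨hz, hz'⟩
  simp only [axesPlacement_inl, axesPlacement_inr] at hz hz'
  by_cases hjj' : j = j'
  · subst hjj'
    have hii' : i ≠ i' := by rintro rfl; exact hne rfl
    exact ⟨.inl j, by simp,
      (eq_apex_of_mem_segment_of_mem_segment (hy0 j) (hx.ne hii') hz hz').symm⟩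
  · obtain ⟨hzi, hzi'⟩ := eq_foot_of_mem_segment_of_mem_segment (hlayer j j' hsame hjj') hz hz'
    have hii' : i = i' := hx (by simpa using hzi.symm.trans hzi')
    exact ⟨.inr i, by simp [hii'], hzi.symm⟩

end CompleteBipartite

-- Heights `1, -2, 3, -4, …`: vertices `2m` and `2m + 1` lie on opposite sides of the axis.
noncomputable def zigzag (j : ℕ) : ℝ := (-1) ^ j * (j + 1)

lemma abs_zigzag (j : ℕ) : |zigzag j| = j + 1 := by
  simp only [zigzag, abs_mul, abs_pow, abs_neg, abs_one, one_pow, one_mul, abs_eq_self]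
  positivity

lemma zigzag_ne_zero (j : ℕ) : zigzag j ≠ 0 := by
  rw [← abs_ne_zero, abs_zigzag]
  positivity

lemma zigzag_injective : Injective zigzag := by
  intro j j' h
  have := congrArg abs h
  rw [abs_zigzag, abs_zigzag] at this
  exact_mod_cast add_right_cancel this

lemma zigzag_mul_zigzag_neg {j j' : ℕ} (hdiv : j / 2 = j' / 2) (hne : j ≠ j') :
    zigzag j * zigzag j' < 0 := by
  have hodd : Odd (j + j') := by rw [Nat.odd_iff]; omega
  have : zigzag j * zigzag j' = -((j + 1) * (j' + 1)) := by
    rw [zigzag, zigzag, mul_mul_mul_comm, ← pow_add, hodd.neg_one_pow]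
    ring
  rw [this, neg_neg_iff_pos]
  positivity

theorem stmt_12_general (a b : ℕ) (ha : 0 < a) :
    geomThickness (completeBipartiteGraph (Fin a) (Fin b)) ≤ ⌈(a : ℚ) / 2⌉₊ := by
  set k := ⌈(a : ℚ) / 2⌉₊
  have : NeZero k := ⟨(Nat.ceil_pos.2 (by positivity)).ne'⟩
  have hlt (j : Fin a) : (j : ℕ) / 2 < k := by
    have : (a : ℚ) ≤ 2 * k := by linarith [Nat.le_ceil ((a : ℚ) / 2)]
    have : a ≤ 2 * k := by exact_mod_cast this
    omega
  refine geomThickness_le_of_hasGeomDrawing <|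
    hasGeomDrawing_completeBipartiteGraph (x := fun i : Fin b ↦ (i : ℝ))
      (y := fun j : Fin a ↦ zigzag j) (fun j ↦ ⟨j / 2, hlt j⟩)
      (Nat.cast_injective.comp Fin.val_injective) (zigzag_injective.comp Fin.val_injective)
      (fun j ↦ zigzag_ne_zero j) fun j j' hsame hne ↦
        zigzag_mul_zigzag_neg (Fin.mk.inj_iff.1 hsame) (Fin.val_injective.ne hne)

/-- For positive integers `a ≤ b`, the geometric thickness of the complete
bipartite graph `K_{a,b}` is at most `⌈a/2⌉`. -/
theorem stmt_12 (a b : ℕ) (ha : 0 < a) (hab : a ≤ b) :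
    geomThickness (completeBipartiteGraph (Fin a) (Fin b)) ≤ ⌈(a : ℚ) / 2⌉₊ :=
  stmt_12_general a b ha
end
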